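/- Let (λ_{d,i})_{d≥1, i≥1} be a family of nonnegative reals, non-increasing in i for each d, with λ_{d,1} > 0, and define n_norm(ε,d) = #{ i ≥ 1 : λ_{d,i}/λ_{d,1} > ε² } ∈ ℕ ∪ {∞}. (a) If there exist constants C, p > 0 and q ≥ 0 such that n_norm(ε,d) ≤ C·ε^{−p}·d^q for all d ≥ 1 and ε ∈ (0,1], then for every τ > p/2 one has sup_{d≥1} d^{−2q/p} ( Σ_{i=1}^{∞} (λ_{d,i}/λ_{d,1})^τ )^{1/τ} ≤ 2^{1/τ}·(1+C)^{2/p}·ζ(2τ/p)^{1/τ}. (b) Conversely, suppose for some r ≥ 0, τ > 0 and constants C > 0, q ≥ 0, setting f(d) = ⌈C·d^q⌉, the quantity C_τ := sup_{d≥1} d^{−r} ( Σ_{i = f(d)}^{∞} (λ_{d,i}/λ_{d,1})^τ )^{1/τ} is finite. Then n_norm(ε,d) ≤ (C + C_τ^τ)·ε^{−2τ}·d^{max(q,rτ)} for every ε ∈ (0,1] and d ≥ 1. -/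

import Mathlib

/-!
(a) Since the sequence is non-increasing, `λ_i/λ_1 > ε²` puts all of the first `i` indices into
the count, so `i ≤ C ε^{-p} d^q`. Taking `ε^{-p} = i / ((1 + C) d^q)` makes this impossible, whence
`λ_i/λ_1 ≤ ((1 + C) d^q / i)^{2/p}`, and summing `τ`-th powers gives `ζ(2τ/p)`.
(b) The indices below `⌈C d^q⌉` number at most `C d^q`; among the others, Chebyshev's inequality
bounds the number with `λ_i/λ_1 > ε²` by the tail sum of `τ`-th powers divided by `ε^{2τ}`.
-/

open scoped ENNReal

/-- `zeta' z = ∑_{n=1}^∞ n^{-z}`, the Riemann zeta function for real `z > 1`. -/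
noncomputable def zeta' (z : ℝ) : ℝ := ∑' n : ℕ, ((n : ℝ) + 1) ^ (-z)

lemma zeta'_nonneg (z : ℝ) : 0 ≤ zeta' z :=
  tsum_nonneg fun _ => by positivity

-- `n_norm(ε)` for the normalized sequence `x i = λ_i / λ_1`.
noncomputable def nNorm (x : ℕ → ℝ) (ε : ℝ) : ℕ∞ := {i : ℕ | 1 ≤ i ∧ ε ^ 2 < x i}.encard

lemma tsum_ofReal_rpow_neg_eq_zeta' {s : ℝ} (hs : 1 < s) :
    ∑' i : {i : ℕ // 1 ≤ i}, ENNReal.ofReal ((i : ℝ) ^ (-s)) = ENNReal.ofReal (zeta' s) := by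
  have hsum : Summable fun n : ℕ => ((n : ℝ) + 1) ^ (-s) := by
    have := (summable_nat_add_iff 1).2 (Real.summable_nat_rpow.2 (by linarith : -s < -1))
    exact_mod_cast this
  rw [zeta', ENNReal.ofReal_tsum_of_nonneg (fun n => by positivity) hsum]
  exact_mod_cast tsum_pnat_eq_tsum_succ (f := fun i : ℕ => ENNReal.ofReal ((i : ℝ) ^ (-s)))

section

variable {x : ℕ → ℝ}

lemma natCast_le_nNorm (hx : AntitoneOn x (Set.Ici 1)) {i : ℕ} (hi : 1 ≤ i) {ε : ℝ}
    (h : ε ^ 2 < x i) : (i : ℕ∞) ≤ nNorm x ε := by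
  have hsub : (Finset.Icc 1 i : Set ℕ) ⊆ {j | 1 ≤ j ∧ ε ^ 2 < x j} := fun j hj => by
    simp only [Finset.coe_Icc, Set.mem_Icc] at hj
    exact ⟨hj.1, h.trans_le (hx hj.1 (Set.mem_Ici.2 hi) hj.2)⟩
  have := Set.encard_le_encard hsub
  rwa [Set.encard_coe_eq_coe_finsetCard, Nat.card_Icc, Nat.add_sub_cancel] at this

lemma le_rpow_of_nNorm_le (hx : AntitoneOn x (Set.Ici 1)) (hx1 : x 1 ≤ 1) {K N p : ℝ}
    (hp : 0 < p) (hN : 0 < N) (hKN : K < N)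
    (h : ∀ ε : ℝ, 0 < ε → ε ≤ 1 → (nNorm x ε : ℝ≥0∞) ≤ ENNReal.ofReal (K * ε ^ (-p)))
    {i : ℕ} (hi : 1 ≤ i) : x i ≤ (N / i) ^ (2 / p) := by
  have hi0 : (0 : ℝ) < i := by exact_mod_cast hi
  have hNi : 0 < N / i := div_pos hN hi0
  rcases le_or_gt 1 (N / i) with hNi1 | hNi1
  · exact (hx (Set.mem_Ici.2 le_rfl) (Set.mem_Ici.2 hi) hi).trans
      (hx1.trans (Real.one_le_rpow hNi1 (by positivity)))
  set ε := (N / i) ^ (1 / p)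
  have hε2 : ε ^ 2 = (N / i) ^ (2 / p) := by
    rw [← Real.rpow_natCast, ← Real.rpow_mul hNi.le]; ring_nf
  have hεp : ε ^ (-p) = i / N := by
    rw [← Real.rpow_mul hNi.le, show 1 / p * -p = -1 by field_simp, Real.rpow_neg_one, inv_div]
  by_contra! hlt
  have hKi : K * (i / N) < i := by
    rw [mul_div_assoc', div_lt_iff₀ hN]; nlinarith
  have := (ENat.toENNReal_le.2 (natCast_le_nNorm hx hi (hε2 ▸ hlt))).trans
    (h ε (Real.rpow_pos_of_pos hNi _) (Real.rpow_le_one hNi.le hNi1.le (by positivity)))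
  rw [hεp, ENat.toENNReal_coe, ← ENNReal.ofReal_natCast] at this
  exact (ENNReal.ofReal_lt_ofReal_iff hi0).2 hKi |>.not_ge this

lemma tsum_ofReal_rpow_le_of_le_rpow {N p τ : ℝ} (hp : 0 < p) (hτ : p / 2 < τ) (hN : 0 < N)
    (h : ∀ i : ℕ, 1 ≤ i → x i ≤ (N / i) ^ (2 / p)) :
    ∑' i : {i : ℕ // 1 ≤ i}, ENNReal.ofReal (x i) ^ τ ≤
      ENNReal.ofReal (N ^ (2 * τ / p) * zeta' (2 * τ / p)) := by
  have hτ0 : 0 < τ := by linarith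
  have hs : 1 < 2 * τ / p := by rw [lt_div_iff₀ hp]; linarith
  rw [ENNReal.ofReal_mul (by positivity), ← tsum_ofReal_rpow_neg_eq_zeta' hs,
    ← ENNReal.tsum_mul_left]
  refine ENNReal.tsum_le_tsum fun ⟨i, hi⟩ => ?_
  have hi0 : (0 : ℝ) < i := by exact_mod_cast hi
  calc ENNReal.ofReal (x i) ^ τ ≤ ENNReal.ofReal ((N / i) ^ (2 / p)) ^ τ := by
        gcongr; exact h i hi
    _ = ENNReal.ofReal (N ^ (2 * τ / p)) * ENNReal.ofReal ((i : ℝ) ^ (-(2 * τ / p))) := by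
      rw [ENNReal.ofReal_rpow_of_nonneg (by positivity) hτ0.le,
        ← ENNReal.ofReal_mul (by positivity), ← Real.rpow_mul (by positivity),
        Real.div_rpow hN.le hi0.le, Real.rpow_neg hi0.le]
      ring_nf

lemma rpow_one_div_tsum_le_of_nNorm_le (hx : AntitoneOn x (Set.Ici 1)) (hx1 : x 1 ≤ 1)
    {C D p τ : ℝ} (hC : 0 ≤ C) (hD : 0 < D) (hp : 0 < p) (hτ : p / 2 < τ)
    (h : ∀ ε : ℝ, 0 < ε → ε ≤ 1 → (nNorm x ε : ℝ≥0∞) ≤ ENNReal.ofReal (C * ε ^ (-p) * D)) :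
    (∑' i : {i : ℕ // 1 ≤ i}, ENNReal.ofReal (x i) ^ τ) ^ (1 / τ) ≤
      ENNReal.ofReal ((1 + C) ^ (2 / p) * zeta' (2 * τ / p) ^ (1 / τ) * D ^ (2 / p)) := by
  have hτ0 : 0 < τ := by linarith
  have hN : 0 < (1 + C) * D := by positivity
  have hz : 0 ≤ zeta' (2 * τ / p) := zeta'_nonneg _
  have hdecay : ∀ i : ℕ, 1 ≤ i → x i ≤ ((1 + C) * D / i) ^ (2 / p) :=
    fun i => le_rpow_of_nNorm_le (K := C * D) hx hx1 hp hN (by nlinarith) (fun ε h0 h1 => by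
      simpa only [mul_right_comm] using h ε h0 h1)
  calc _ ≤ ENNReal.ofReal (((1 + C) * D) ^ (2 * τ / p) * zeta' (2 * τ / p)) ^ (1 / τ) := by
        gcongr; exact tsum_ofReal_rpow_le_of_le_rpow hp hτ hN hdecay
    _ = _ := by
        rw [ENNReal.ofReal_rpow_of_nonneg (by positivity) (by positivity),
          Real.mul_rpow (by positivity) hz, ← Real.rpow_mul hN.le,
          show 2 * τ / p * (1 / τ) = 2 / p by field_simp, Real.mul_rpow (by positivity) hD.le]
        ring_nf

end

lemma encard_mul_le_tsum {ι : Type*} {f : ι → ℝ≥0∞} {s : Set ι} {c : ℝ≥0∞}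
    (h : ∀ i ∈ s, c ≤ f i) : (s.encard : ℝ≥0∞) * c ≤ ∑' i : s, f i := by
  rw [← ENNReal.tsum_set_const]
  exact ENNReal.tsum_le_tsum fun i => h i i.2

lemma nNorm_le_add_tsum_div (x : ℕ → ℝ) (m : ℕ) {ε τ : ℝ} (hε : 0 < ε) (hτ : 0 < τ) :
    (nNorm x ε : ℝ≥0∞) ≤ ((m - 1 : ℕ) : ℝ≥0∞) +
      (∑' i : {i : ℕ // m ≤ i}, ENNReal.ofReal (x i) ^ τ) / ENNReal.ofReal (ε ^ 2) ^ τ := by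
  set tail := {i : ℕ | m ≤ i ∧ ε ^ 2 < x i}
  have hsplit : {i : ℕ | 1 ≤ i ∧ ε ^ 2 < x i} ⊆ (Finset.Ico 1 m : Set ℕ) ∪ tail := by
    rintro i ⟨hi1, hix⟩
    rcases lt_or_ge i m with him | him
    · exact Or.inl (by simpa using ⟨hi1, him⟩)
    · exact Or.inr ⟨him, hix⟩
  have htail : (tail.encard : ℝ≥0∞) * ENNReal.ofReal (ε ^ 2) ^ τ ≤
      ∑' i : {i : ℕ // m ≤ i}, ENNReal.ofReal (x i) ^ τ :=
    (encard_mul_le_tsum (f := fun i => ENNReal.ofReal (x i) ^ τ) fun i hi => by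
      gcongr; exact hi.2.le).trans
      (ENNReal.tsum_mono_subtype (fun i => ENNReal.ofReal (x i) ^ τ) fun i hi => hi.1)
  have hpos : ENNReal.ofReal (ε ^ 2) ^ τ ≠ 0 := by positivity
  calc (nNorm x ε : ℝ≥0∞) ≤ (((Finset.Ico 1 m : Set ℕ) ∪ tail).encard : ℝ≥0∞) :=
        ENat.toENNReal_le.2 (Set.encard_le_encard hsplit)
    _ ≤ ((Finset.Ico 1 m : Set ℕ).encard : ℝ≥0∞) + tail.encard := by
        rw [← ENat.toENNReal_add]; exact ENat.toENNReal_le.2 (Set.encard_union_le _ _)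
    _ ≤ _ := by
        rw [Set.encard_coe_eq_coe_finsetCard, Nat.card_Ico]
        gcongr
        · simp
        · exact (ENNReal.le_div_iff_mul_le (Or.inl hpos)
            (Or.inl (ENNReal.rpow_ne_top_of_nonneg hτ.le ENNReal.ofReal_ne_top))).2 htail

lemma nNorm_le_of_rpow_one_div_tsum_le (x : ℕ → ℝ) (m : ℕ) {ε τ B : ℝ} (hε : 0 < ε)
    (hτ : 0 < τ) (hB : 0 ≤ B)
    (h : (∑' i : {i : ℕ // m ≤ i}, ENNReal.ofReal (x i) ^ τ) ^ (1 / τ) ≤ ENNReal.ofReal B) :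
    (nNorm x ε : ℝ≥0∞) ≤ ENNReal.ofReal ((m - 1 : ℕ) + B ^ τ * ε ^ (-(2 * τ))) := by
  rw [one_div, ENNReal.rpow_inv_le_iff hτ, ENNReal.ofReal_rpow_of_nonneg hB hτ.le] at h
  refine (nNorm_le_add_tsum_div x m hε hτ).trans ?_
  rw [ENNReal.ofReal_add (by positivity) (by positivity), ENNReal.ofReal_natCast,
    ENNReal.ofReal_rpow_of_nonneg (by positivity) hτ.le, Real.rpow_neg (by positivity),
    ← div_eq_mul_inv, ENNReal.ofReal_div_of_pos (by positivity), ← Real.rpow_natCast,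
    ← Real.rpow_mul hε.le]
  push_cast
  gcongr

theorem stmt5_general (lam : ℕ → ℕ → ℝ)
    (hmono : ∀ d, 1 ≤ d → ∀ i j : ℕ, 1 ≤ i → i ≤ j → lam d j ≤ lam d i)
    (htop : ∀ d : ℕ, 1 ≤ d → 0 < lam d 1) :
    (∀ C p q : ℝ, 0 < C → 0 < p → 0 ≤ q →
      (∀ d : ℕ, 1 ≤ d → ∀ ε : ℝ, 0 < ε → ε ≤ 1 →
        ({i : ℕ | 1 ≤ i ∧ ε ^ 2 < lam d i / lam d 1}.encard : ℝ≥0∞) ≤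
          ENNReal.ofReal (C * ε ^ (-p) * (d : ℝ) ^ q)) →
      ∀ τ : ℝ, p / 2 < τ → ∀ d : ℕ, 1 ≤ d →
        (∑' i : {i : ℕ // 1 ≤ i},
            ENNReal.ofReal (lam d i / lam d 1) ^ τ) ^ (1 / τ) ≤
          ENNReal.ofReal ((2 : ℝ) ^ (1 / τ) * (1 + C) ^ (2 / p) *
            zeta' (2 * τ / p) ^ (1 / τ) * (d : ℝ) ^ (2 * q / p)))
    ∧
    (∀ r τ C q Cτ : ℝ, 0 ≤ r → 0 < τ → 0 < C → 0 ≤ q → 0 ≤ Cτ →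
      (∀ d : ℕ, 1 ≤ d →
        (∑' i : {i : ℕ // ⌈C * (d : ℝ) ^ q⌉₊ ≤ i},
            ENNReal.ofReal (lam d i / lam d 1) ^ τ) ^ (1 / τ) ≤
          ENNReal.ofReal (Cτ * (d : ℝ) ^ r)) →
      ∀ d : ℕ, 1 ≤ d → ∀ ε : ℝ, 0 < ε → ε ≤ 1 →
        ({i : ℕ | 1 ≤ i ∧ ε ^ 2 < lam d i / lam d 1}.encard : ℝ≥0∞) ≤
          ENNReal.ofReal ((C + Cτ ^ τ) * ε ^ (-(2 * τ)) * (d : ℝ) ^ max q (r * τ))) := by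
  constructor
  · intro C p q hC hp _ hyp τ hτ d hd
    have hd0 : (0 : ℝ) < d := by exact_mod_cast hd
    have hx : AntitoneOn (fun i => lam d i / lam d 1) (Set.Ici 1) := fun i hi j _ hij =>
      div_le_div_of_nonneg_right (hmono d hd i j hi hij) (htop d hd).le
    refine (rpow_one_div_tsum_le_of_nNorm_le hx (div_self (htop d hd).ne').le hC.le
      (Real.rpow_pos_of_pos hd0 q) hp hτ (hyp d hd)).trans (ENNReal.ofReal_le_ofReal ?_)
    rw [← Real.rpow_mul hd0.le, mul_div_assoc', mul_comm q]
    have hτ0 : 0 < τ := by linarith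
    have hz : 0 ≤ zeta' (2 * τ / p) := zeta'_nonneg _
    simpa only [mul_assoc] using le_mul_of_one_le_left (by positivity)
      (Real.one_le_rpow one_le_two (by positivity : 0 ≤ 1 / τ))
  · intro r τ C q Cτ _ hτ hC _ hCτ hyp d hd ε hε0 hε1
    have hd1 : (1 : ℝ) ≤ d := by exact_mod_cast hd
    refine (nNorm_le_of_rpow_one_div_tsum_le _ _ hε0 hτ (by positivity) (hyp d hd)).trans
      (ENNReal.ofReal_le_ofReal ?_)
    have hm : ((⌈C * (d : ℝ) ^ q⌉₊ - 1 : ℕ) : ℝ) ≤ C * (d : ℝ) ^ q := by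
      rcases Nat.eq_zero_or_pos ⌈C * (d : ℝ) ^ q⌉₊ with h0 | hpos
      · rw [h0]; simp only [Nat.zero_sub, Nat.cast_zero]; positivity
      · exact (Nat.lt_ceil.1 (Nat.sub_lt hpos one_pos)).le
    have hε : 1 ≤ ε ^ (-(2 * τ)) :=
      Real.one_le_rpow_of_pos_of_le_one_of_nonpos hε0 hε1 (by linarith)
    have hdq := Real.rpow_le_rpow_of_exponent_le hd1 (le_max_left q (r * τ))
    have hdr := Real.rpow_le_rpow_of_exponent_le hd1 (le_max_right q (r * τ))
    have hCττ : 0 ≤ Cτ ^ τ := by positivity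
    rw [Real.mul_rpow hCτ (by positivity), ← Real.rpow_mul (by positivity)]
    nlinarith [mul_le_mul_of_nonneg_left hdq hC.le, mul_le_mul_of_nonneg_left hdr hCττ,
      mul_le_mul_of_nonneg_right hε
        (mul_nonneg hC.le (Real.rpow_nonneg (by positivity) (max q (r * τ))))]

/-- **Paper Theorem 2.7** (characterization of (strong) polynomial tractability via the
normalized error criterion): `lam d i` are the non-increasingly ordered squared singular
values with `lam d 1 > 0`; the information complexity is
`n_norm(ε,d) = #{i ≥ 1 : lam d i / lam d 1 > ε²}`.
(a) Polynomial tractability with constants `C, p, q` implies, for every `τ > p/2`,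
`(∑_{i ≥ 1} (lam d i / lam d 1)^τ)^{1/τ} ≤ 2^{1/τ} (1+C)^{2/p} ζ(2τ/p)^{1/τ} d^{2q/p}`.
(b) Conversely, a bound `(∑_{i ≥ ⌈C d^q⌉} (lam d i / lam d 1)^τ)^{1/τ} ≤ Cτ d^r` yields
`n_norm(ε,d) ≤ (C + Cτ^τ) ε^{-2τ} d^{max(q,rτ)}`. -/
theorem stmt5 (lam : ℕ → ℕ → ℝ)
    (hnn : ∀ d i, 0 ≤ lam d i)
    (hmono : ∀ d, 1 ≤ d → ∀ i j : ℕ, 1 ≤ i → i ≤ j → lam d j ≤ lam d i)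
    (htop : ∀ d : ℕ, 1 ≤ d → 0 < lam d 1) :
    (∀ C p q : ℝ, 0 < C → 0 < p → 0 ≤ q →
      (∀ d : ℕ, 1 ≤ d → ∀ ε : ℝ, 0 < ε → ε ≤ 1 →
        ({i : ℕ | 1 ≤ i ∧ ε ^ 2 < lam d i / lam d 1}.encard : ℝ≥0∞) ≤
          ENNReal.ofReal (C * ε ^ (-p) * (d : ℝ) ^ q)) →
      ∀ τ : ℝ, p / 2 < τ → ∀ d : ℕ, 1 ≤ d →
        (∑' i : {i : ℕ // 1 ≤ i},
            ENNReal.ofReal (lam d i / lam d 1) ^ τ) ^ (1 / τ) ≤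
          ENNReal.ofReal ((2 : ℝ) ^ (1 / τ) * (1 + C) ^ (2 / p) *
            zeta' (2 * τ / p) ^ (1 / τ) * (d : ℝ) ^ (2 * q / p)))
    ∧
    (∀ r τ C q Cτ : ℝ, 0 ≤ r → 0 < τ → 0 < C → 0 ≤ q → 0 ≤ Cτ →
      (∀ d : ℕ, 1 ≤ d →
        (∑' i : {i : ℕ // ⌈C * (d : ℝ) ^ q⌉₊ ≤ i},
            ENNReal.ofReal (lam d i / lam d 1) ^ τ) ^ (1 / τ) ≤
          ENNReal.ofReal (Cτ * (d : ℝ) ^ r)) →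
      ∀ d : ℕ, 1 ≤ d → ∀ ε : ℝ, 0 < ε → ε ≤ 1 →
        ({i : ℕ | 1 ≤ i ∧ ε ^ 2 < lam d i / lam d 1}.encard : ℝ≥0∞) ≤
          ENNReal.ofReal ((C + Cτ ^ τ) * ε ^ (-(2 * τ)) * (d : ℝ) ^ max q (r * τ))) :=
  stmt5_general lam hmono htop
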